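/- Let n ≥ 1 and let Q_1, …, Q_{n²} be n×n complex Hermitian matrices forming an orthonormal family with respect to the real inner product ⟨A,B⟩ = Re tr(A Bᴴ) (i.e., ⟨Q_α, Q_β⟩ = δ_{αβ}). Then for every index α ∈ {1, …, n²} and every subset J ⊆ {1, …, n²}, Σ_{β∈J} (‖[Q_α, Q_β]‖² − 4/3) ≤ 4/3. -/

import Mathlib

open Matrix Finset

/-- Squared Frobenius norm of a complex matrix: `Re tr (A Aᴴ)`. -/
noncomputable def frobSq {n : ℕ} (A : Matrix (Fin n) (Fin n) ℂ) : ℝ :=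
  ((A * Aᴴ).trace).re

/-- Real inner product on complex matrices: `Re tr (A Bᴴ)`. -/
noncomputable def minner {n : ℕ} (A B : Matrix (Fin n) (Fin n) ℂ) : ℝ :=
  ((A * Bᴴ).trace).re

/-- Commutator of matrices. -/
noncomputable def mcomm {n : ℕ} (A B : Matrix (Fin n) (Fin n) ℂ) : Matrix (Fin n) (Fin n) ℂ :=
  A * B - B * A

lemma minner_eq_sum {n : ℕ} (A B : Matrix (Fin n) (Fin n) ℂ) :
    minner A B = ∑ i, ∑ j, (A i j * (starRingEnd ℂ) (B i j)).re := by
  simp [minner, Matrix.trace, Matrix.diag, Matrix.mul_apply, Complex.re_sum,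
    Matrix.conjTranspose_apply]

lemma frobSq_eq_sum {n : ℕ} (A : Matrix (Fin n) (Fin n) ℂ) :
    frobSq A = ∑ i, ∑ j, Complex.normSq (A i j) := by
  have : frobSq A = minner A A := rfl
  rw [this, minner_eq_sum]
  simp [Complex.mul_conj, Complex.normSq_eq_norm_sq]
  norm_cast

lemma minner_comm {n : ℕ} (A B : Matrix (Fin n) (Fin n) ℂ) : minner A B = minner B A := by
  rw [minner_eq_sum, minner_eq_sum]
  congr 1; ext i; congr 1; ext j
  rw [← Complex.conj_re (B i j * _)]
  simp [mul_comm]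

lemma minner_self_nonneg {n : ℕ} (A : Matrix (Fin n) (Fin n) ℂ) : 0 ≤ minner A A := by
  have : minner A A = frobSq A := rfl
  rw [this, frobSq_eq_sum]
  apply Finset.sum_nonneg; intro i _
  apply Finset.sum_nonneg; intro j _
  exact Complex.normSq_nonneg _

lemma minner_sub_left {n : ℕ} (A B C : Matrix (Fin n) (Fin n) ℂ) :
    minner (A - B) C = minner A C - minner B C := by
  simp [minner_eq_sum, sub_mul, Finset.sum_sub_distrib]

lemma minner_add_left {n : ℕ} (A B C : Matrix (Fin n) (Fin n) ℂ) :
    minner (A + B) C = minner A C + minner B C := by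
  simp [minner_eq_sum, add_mul, Finset.sum_add_distrib]

lemma minner_sum_left {n : ℕ} {ι : Type*} (s : Finset ι) (f : ι → Matrix (Fin n) (Fin n) ℂ)
    (C : Matrix (Fin n) (Fin n) ℂ) :
    minner (∑ i ∈ s, f i) C = ∑ i ∈ s, minner (f i) C := by
  classical
  induction s using Finset.induction with
  | empty => simp [minner_eq_sum]
  | insert _ _ h ih => rw [Finset.sum_insert h, Finset.sum_insert h, ← ih, minner_add_left]

lemma minner_smul_left {n : ℕ} (r : ℝ) (A B : Matrix (Fin n) (Fin n) ℂ) :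
    minner ((r : ℂ) • A) B = r * minner A B := by
  simp [minner_eq_sum, Finset.mul_sum, mul_assoc, Complex.re_ofReal_mul]

lemma bessel {n N : ℕ} (R : Fin N → Matrix (Fin n) (Fin n) ℂ)
    (hON : ∀ β γ, minner (R β) (R γ) = if β = γ then 1 else 0)
    (J : Finset (Fin N)) (v : Matrix (Fin n) (Fin n) ℂ) :
    ∑ β ∈ J, (minner (R β) v) ^ 2 ≤ minner v v := by
  have key := minner_self_nonneg (v - ∑ β ∈ J, ((minner (R β) v : ℝ) : ℂ) • R β)
  set c : Fin N → ℝ := fun β => minner (R β) v with hc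
  have expand : minner (v - ∑ β ∈ J, ((c β : ℝ) : ℂ) • R β)
      (v - ∑ β ∈ J, ((c β : ℝ) : ℂ) • R β) = minner v v - ∑ β ∈ J, c β ^ 2 := by
    have hsub : ∀ (X Y Z : Matrix (Fin n) (Fin n) ℂ),
        minner X (Y - Z) = minner X Y - minner X Z := fun X Y Z => by
      rw [minner_comm, minner_sub_left, minner_comm Y, minner_comm Z]
    rw [minner_sub_left, hsub, hsub, minner_sum_left, minner_sum_left]
    have h1 : ∀ β ∈ J, minner (((c β : ℝ) : ℂ) • R β) v = c β * c β := by
      intro β _; rw [minner_smul_left]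
    have h2 : ∀ β ∈ J, minner (((c β : ℝ) : ℂ) • R β) (∑ γ ∈ J, ((c γ : ℝ) : ℂ) • R γ) =
        c β * c β := by
      intro β hβ
      rw [minner_smul_left, minner_comm, minner_sum_left]
      rw [Finset.sum_eq_single β
        (fun γ _ hγ => by rw [minner_smul_left, hON γ β, if_neg hγ, mul_zero])
        (fun h => absurd hβ h)]
      rw [minner_smul_left, hON β β, if_pos rfl]; ring
    rw [Finset.sum_congr rfl h1, Finset.sum_congr rfl h2]
    have h3 : minner v (∑ β ∈ J, ((c β : ℝ) : ℂ) • R β) = ∑ β ∈ J, c β * c β := by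
      rw [minner_comm, minner_sum_left]; exact Finset.sum_congr rfl h1
    rw [h3]
    simp only [← sq]
    ring
  rw [expand] at key
  linarith

lemma minner_add_right {n : ℕ} (A B C : Matrix (Fin n) (Fin n) ℂ) :
    minner A (B + C) = minner A B + minner A C := by
  rw [minner_comm, minner_add_left, minner_comm B, minner_comm C]

lemma minner_std {n : ℕ} (X : Matrix (Fin n) (Fin n) ℂ) (k l : Fin n) (c : ℂ) :
    minner X (Matrix.single k l c) = (X k l * (starRingEnd ℂ) c).re := by
  rw [minner_eq_sum]
  have step : ∀ a : Fin n, (∑ b, (X a b * (starRingEnd ℂ) (Matrix.single k l c a b)).re)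
      = if a = k then (X k l * (starRingEnd ℂ) c).re else 0 := by
    intro a
    by_cases hak : a = k
    · subst hak
      rw [if_pos rfl, Finset.sum_eq_single l]
      · simp [Matrix.single_apply_same]
      · intro b _ hb
        rw [Matrix.single_apply_of_ne _ _ _ _ _ (by tauto)]
        simp
      · intro h; exact absurd (Finset.mem_univ l) h
    · rw [if_neg hak]
      refine Finset.sum_eq_zero fun b _ => ?_
      rw [Matrix.single_apply_of_ne _ _ _ _ _ (by tauto)]
      simp
  rw [Finset.sum_congr rfl fun a _ => step a, Finset.sum_ite_eq' Finset.univ k,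
    if_pos (Finset.mem_univ k)]

lemma sum_normSq_le {n N : ℕ} (R : Fin N → Matrix (Fin n) (Fin n) ℂ)
    (hH : ∀ β, (R β)ᴴ = R β)
    (hON : ∀ β γ, minner (R β) (R γ) = if β = γ then 1 else 0)
    (J : Finset (Fin N)) {i j : Fin n} (hij : i ≠ j) :
    ∑ β ∈ J, Complex.normSq (R β i j) ≤ 1 := by
  have hconj : ∀ β, R β j i = (starRingEnd ℂ) (R β i j) := by
    intro β
    have := congrFun (congrFun (hH β) j) i
    rw [Matrix.conjTranspose_apply] at this
    rw [← this, RCLike.star_def]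
  set v := Matrix.single i j (1 : ℂ) + Matrix.single j i (1 : ℂ) with hv
  set w := Matrix.single i j (Complex.I) + Matrix.single j i (-Complex.I) with hw
  have hstd_ne : ∀ (c : ℂ), Matrix.single j i c i j = 0 := fun c =>
    Matrix.single_apply_of_ne _ _ _ _ _ (by tauto)
  have hstd_ne' : ∀ (c : ℂ), Matrix.single i j c j i = 0 := fun c =>
    Matrix.single_apply_of_ne _ _ _ _ _ (by tauto)
  have hvv : minner v v = 2 := by
    rw [hv, minner_add_right, minner_std, minner_std]
    simp [Matrix.add_apply, Matrix.single_apply_same, hstd_ne, hstd_ne']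
    norm_num
  have hww : minner w w = 2 := by
    rw [hw, minner_add_right, minner_std, minner_std]
    simp [Matrix.add_apply, Matrix.single_apply_same, hstd_ne, hstd_ne',
      Complex.ext_iff]
    norm_num
  have hRv : ∀ β, minner (R β) v = 2 * (R β i j).re := by
    intro β
    rw [hv, minner_add_right, minner_std, minner_std, hconj β]
    simp
    ring
  have hRw : ∀ β, minner (R β) w = 2 * (R β i j).im := by
    intro β
    rw [hw, minner_add_right, minner_std, minner_std, hconj β]
    simp [Complex.mul_re]
    ring
  have b1 := bessel R hON J v
  have b2 := bessel R hON J w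
  rw [hvv] at b1
  rw [hww] at b2
  rw [Finset.sum_congr rfl fun β _ => by rw [hRv β]] at b1
  rw [Finset.sum_congr rfl fun β _ => by rw [hRw β]] at b2
  have e1 : ∑ β ∈ J, (2 * (R β i j).re) ^ 2 = 4 * ∑ β ∈ J, (R β i j).re ^ 2 := by
    rw [Finset.mul_sum]; exact Finset.sum_congr rfl fun β _ => by ring
  have e2 : ∑ β ∈ J, (2 * (R β i j).im) ^ 2 = 4 * ∑ β ∈ J, (R β i j).im ^ 2 := by
    rw [Finset.mul_sum]; exact Finset.sum_congr rfl fun β _ => by ring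
  rw [e1] at b1; rw [e2] at b2
  have : ∑ β ∈ J, Complex.normSq (R β i j)
      = (∑ β ∈ J, (R β i j).re ^ 2) + ∑ β ∈ J, (R β i j).im ^ 2 := by
    rw [← Finset.sum_add_distrib]
    exact Finset.sum_congr rfl fun β _ => by rw [Complex.normSq_apply]; ring
  rw [this]
  linarith

lemma hsign3 {n : ℕ} (l : Fin n → ℝ) (x y z : Fin n)
    (hA : l x * l y < 0) (hB : l y * l z < 0) (hC : l x * l z < 0) : False := by
  have hid : (l x * l y) * (l y * l z) * (l x * l z) = (l x * l y * l z) ^ 2 := by ring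
  have h2' : ((l x * l y) * (l y * l z)) * (l x * l z) < 0 :=
    mul_neg_of_pos_of_neg (mul_pos_of_neg_of_neg hA hB) hC
  rw [hid] at h2'
  exact absurd h2' (not_lt.2 (sq_nonneg _))

lemma clip_bound {n : ℕ} (l : Fin n → ℝ) (hl : ∑ i, l i ^ 2 = 1) :
    ∑ i, ∑ j, max ((l i - l j) ^ 2 - 4 / 3) 0 ≤ 4 / 3 := by
  classical
  have hnn : ∀ i, 0 ≤ l i ^ 2 := fun i => sq_nonneg _
  have hsum2 : ∀ i j : Fin n, i ≠ j → l i ^ 2 + l j ^ 2 ≤ 1 := by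
    intro i j hij
    calc l i ^ 2 + l j ^ 2 = ∑ k ∈ ({i, j} : Finset (Fin n)), l k ^ 2 := by
          rw [Finset.sum_insert (by simp [hij]), Finset.sum_singleton]
      _ ≤ ∑ k, l k ^ 2 := Finset.sum_le_univ_sum_of_nonneg hnn
      _ = 1 := hl
  have hPne : ∀ i j : Fin n, 4 / 3 < (l i - l j) ^ 2 → i ≠ j := by
    intro i j h
    rintro rfl
    simp at h
    norm_num at h
  have hopp : ∀ i j : Fin n, 4 / 3 < (l i - l j) ^ 2 → l i * l j < 0 := by
    intro i j h
    have := hsum2 i j (hPne i j h)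
    nlinarith
  have hsum4 : ∀ i j k m : Fin n, i ≠ j → i ≠ k → i ≠ m → j ≠ k → j ≠ m → k ≠ m →
      l i ^ 2 + l j ^ 2 + l k ^ 2 + l m ^ 2 ≤ 1 := by
    intro i j k m h1 h2 h3 h4 h5 h6
    calc l i ^ 2 + l j ^ 2 + l k ^ 2 + l m ^ 2
        = ∑ x ∈ ({i, j, k, m} : Finset (Fin n)), l x ^ 2 := by
          rw [Finset.sum_insert (by simp [h1, h2, h3]),
            Finset.sum_insert (by simp [h4, h5]),
            Finset.sum_insert (by simp [h6]), Finset.sum_singleton]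
          ring
      _ ≤ ∑ x, l x ^ 2 := Finset.sum_le_univ_sum_of_nonneg hnn
      _ = 1 := hl
  have hint' : ∀ i j k m : Fin n, 4 / 3 < (l i - l j) ^ 2 → 4 / 3 < (l k - l m) ^ 2 →
      i = k ∨ i = m ∨ j = k ∨ j = m := by
    intro i j k m h1 h2
    by_contra hc
    push_neg at hc
    obtain ⟨c1, c2, c3, c4⟩ := hc
    have h4 := hsum4 i j k m (hPne i j h1) c1 c2 c3 c4 (hPne k m h2)
    nlinarith [sq_nonneg (l i + l j), sq_nonneg (l k + l m)]
  -- rewrite the double sum as a sum over the filtered set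
  set S : Finset (Fin n × Fin n) :=
    Finset.univ.filter (fun p => 4 / 3 < (l p.1 - l p.2) ^ 2) with hS
  have hrw : ∑ i, ∑ j, max ((l i - l j) ^ 2 - 4 / 3) 0
      = ∑ p ∈ S, ((l p.1 - l p.2) ^ 2 - 4 / 3) := by
    rw [hS, Finset.sum_filter, ← Finset.univ_product_univ, Finset.sum_product]
    refine Finset.sum_congr rfl fun i _ => Finset.sum_congr rfl fun j _ => ?_
    by_cases h : 4 / 3 < (l i - l j) ^ 2
    · rw [if_pos h, max_eq_left (by linarith)]
    · rw [if_neg h, max_eq_right (by push_neg at h; linarith)]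
  rw [hrw]
  rcases Finset.eq_empty_or_nonempty S with hSe | hSne
  · rw [hSe, Finset.sum_empty]; norm_num
  -- star structure
  have hstar : ∃ u : Fin n, ∀ r ∈ S, r.1 = u ∨ r.2 = u := by
    obtain ⟨⟨p, q⟩, hpq⟩ := hSne
    have hPpq : 4 / 3 < (l p - l q) ^ 2 := (Finset.mem_filter.1 hpq).2
    by_cases hp : ∀ r ∈ S, r.1 = p ∨ r.2 = p
    · exact ⟨p, hp⟩
    push_neg at hp
    obtain ⟨⟨i0, j0⟩, hr0S, hi0p, hj0p⟩ := hp
    simp only at hi0p hj0p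
    have hP0 : 4 / 3 < (l i0 - l j0) ^ 2 := (Finset.mem_filter.1 hr0S).2
    have hq0 : q = i0 ∨ q = j0 := by
      rcases hint' p q i0 j0 hPpq hP0 with h | h | h | h
      · exact absurd h.symm hi0p
      · exact absurd h.symm hj0p
      · exact Or.inl h
      · exact Or.inr h
    refine ⟨q, ?_⟩
    rintro ⟨i, j⟩ hijS
    simp only
    have hPij : 4 / 3 < (l i - l j) ^ 2 := (Finset.mem_filter.1 hijS).2
    by_contra hc
    push_neg at hc
    obtain ⟨hiq, hjq⟩ := hc
    have hpij : i = p ∨ j = p := by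
      rcases hint' p q i j hPpq hPij with h | h | h | h
      · exact Or.inl h.symm
      · exact Or.inr h.symm
      · exact absurd h.symm hiq
      · exact absurd h.symm hjq
    have hA : l p * l q < 0 := hopp p q hPpq
    have hB : l i0 * l j0 < 0 := hopp i0 j0 hP0
    have hC : l i * l j < 0 := hopp i j hPij
    rcases hpij with hip | hjp
    · -- i = p, so j shares with {i0,j0} and j ≠ q
      subst hip
      have hj : j = i0 ∨ j = j0 := by
        rcases hint' i j i0 j0 hPij hP0 with h | h | h | h
        · exact absurd h (Ne.symm hi0p)
        · exact absurd h (Ne.symm hj0p)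
        · exact Or.inl h
        · exact Or.inr h
      have hqj : l q * l j < 0 := by
        rcases hq0 with rfl | rfl <;> rcases hj with rfl | rfl
        · exact absurd rfl hjq
        · exact hB
        · rw [mul_comm]; exact hB
        · exact absurd rfl hjq
      exact hsign3 l i q j hA hqj hC
    · -- j = p, so i shares with {i0,j0} and i ≠ q
      subst hjp
      have hi : i = i0 ∨ i = j0 := by
        rcases hint' i j i0 j0 hPij hP0 with h | h | h | h
        · exact Or.inl h
        · exact Or.inr h
        · exact absurd h (Ne.symm hi0p)
        · exact absurd h (Ne.symm hj0p)
      have hqi : l q * l i < 0 := by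
        rcases hq0 with rfl | rfl <;> rcases hi with rfl | rfl
        · exact absurd rfl hiq
        · exact hB
        · rw [mul_comm]; exact hB
        · exact absurd rfl hiq
      exact hsign3 l j q i hA hqi (by rw [mul_comm] at hC; exact hC)
  obtain ⟨u, hu⟩ := hstar
  set N : Finset (Fin n) := Finset.univ.filter (fun j => 4 / 3 < (l u - l j) ^ 2) with hN
  have hsymmsq : ∀ i j : Fin n, (l i - l j) ^ 2 = (l j - l i) ^ 2 := fun i j => by ring
  have huN : u ∉ N := by
    intro h
    have := (Finset.mem_filter.1 h).2
    simp at this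
    norm_num at this
  have hSeq : S = ({u} ×ˢ N) ∪ (N ×ˢ {u}) := by
    ext ⟨i, j⟩
    simp only [Finset.mem_union, Finset.mem_product, Finset.mem_singleton, hS, hN,
      Finset.mem_filter, Finset.mem_univ, true_and]
    constructor
    · rintro h
      rcases hu (i, j) (by rw [hS]; simp only [Finset.mem_filter, Finset.mem_univ, true_and]; exact h) with h1 | h1
      · simp only at h1; subst h1; exact Or.inl ⟨rfl, h⟩
      · simp only at h1; subst h1; exact Or.inr ⟨by rw [hsymmsq]; exact h, rfl⟩
    · rintro (⟨rfl, h⟩ | ⟨h, rfl⟩)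
      · exact h
      · rw [hsymmsq]; exact h
  have hdisj : Disjoint ({u} ×ˢ N) (N ×ˢ {u}) := by
    rw [Finset.disjoint_left]
    rintro ⟨i, j⟩ h1 h2
    simp only [Finset.mem_product, Finset.mem_singleton] at h1 h2
    exact huN (h1.1 ▸ h2.1)
  have hsum_split : ∑ p ∈ S, ((l p.1 - l p.2) ^ 2 - 4 / 3)
      = 2 * ∑ j ∈ N, ((l u - l j) ^ 2 - 4 / 3) := by
    rw [hSeq, Finset.sum_union hdisj, Finset.sum_product, Finset.sum_product,
      Finset.sum_singleton]
    have : ∑ i ∈ N, ∑ j ∈ ({u} : Finset (Fin n)), ((l i - l j) ^ 2 - 4 / 3)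
        = ∑ i ∈ N, ((l u - l i) ^ 2 - 4 / 3) := by
      refine Finset.sum_congr rfl fun i _ => ?_
      rw [Finset.sum_singleton, hsymmsq]
    rw [this]
    ring
  rw [hsum_split]
  -- N is nonempty
  have hNne : N.Nonempty := by
    obtain ⟨⟨p, q⟩, hpq⟩ := hSne
    rw [hSeq] at hpq
    rcases Finset.mem_union.1 hpq with h | h
    · exact ⟨q, (Finset.mem_product.1 h).2⟩
    · exact ⟨p, (Finset.mem_product.1 h).1⟩
  -- final numeric bound
  set a := |l u| with ha
  set T := ∑ j ∈ N, |l j| with hT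
  set s' := ∑ j ∈ N, |l j| ^ 2 with hs'
  set m := (N.card : ℝ) with hm
  have hm1 : 1 ≤ m := by
    rw [hm]
    exact_mod_cast Finset.card_pos.2 hNne
  have hTnn : 0 ≤ T := Finset.sum_nonneg fun j _ => abs_nonneg _
  have hann : 0 ≤ a := abs_nonneg _
  have hsnn : 0 ≤ s' := Finset.sum_nonneg fun j _ => sq_nonneg _
  have hTs : T ^ 2 ≤ m * s' := by
    rw [hT, hs', hm]
    have := sq_sum_le_card_mul_sum_sq (s := N) (f := fun j => |l j|)
    exact_mod_cast this
  have has : a ^ 2 + s' ≤ 1 := by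
    have : a ^ 2 + s' = ∑ k ∈ insert u N, l k ^ 2 := by
      rw [Finset.sum_insert huN, ha, sq_abs, hs']
      congr 1
      exact Finset.sum_congr rfl fun j _ => (sq_abs _)
    rw [this]
    calc ∑ k ∈ insert u N, l k ^ 2 ≤ ∑ k, l k ^ 2 :=
          Finset.sum_le_univ_sum_of_nonneg hnn
      _ = 1 := hl
  have hterm : ∀ j ∈ N, (l u - l j) ^ 2 = (a + |l j|) ^ 2 := by
    intro j hj
    have hP : 4 / 3 < (l u - l j) ^ 2 := (Finset.mem_filter.1 hj).2
    have hxy := hopp u j hP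
    have hab : a * |l j| = -(l u * l j) := by
      rw [ha, ← abs_mul, abs_of_neg hxy]
    have e1 := sq_abs (l u)
    have e2 := sq_abs (l j)
    rw [ha]
    nlinarith [e1, e2, hab]
  have hexp : ∑ j ∈ N, ((l u - l j) ^ 2 - 4 / 3) = m * a ^ 2 + 2 * a * T + s' - 4 / 3 * m := by
    rw [Finset.sum_sub_distrib, Finset.sum_const, Finset.sum_congr rfl hterm]
    have : ∑ j ∈ N, (a + |l j|) ^ 2 = ∑ j ∈ N, (a ^ 2 + 2 * a * |l j| + |l j| ^ 2) :=
      Finset.sum_congr rfl fun j _ => by ring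
    rw [this, Finset.sum_add_distrib, Finset.sum_add_distrib, Finset.sum_const, ← Finset.mul_sum,
      ← hT, ← hs']
    simp only [nsmul_eq_mul, ← hm]
    ring
  rw [hexp]
  have hint2 : 0 ≤ (m - 1) * (1 - (a ^ 2 + s')) :=
    mul_nonneg (by linarith) (by linarith)
  nlinarith [sq_nonneg (a - T), hTs, hint2]


lemma conj_mul_eq {n : ℕ} {Um : Matrix (Fin n) (Fin n) ℂ} (hU : Um * Umᴴ = 1)
    (X Y : Matrix (Fin n) (Fin n) ℂ) :
    (Umᴴ * X * Um) * (Umᴴ * Y * Um) = Umᴴ * (X * Y) * Um := by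
  simp only [Matrix.mul_assoc]
  congr 1
  congr 1
  rw [← Matrix.mul_assoc Um Umᴴ, hU, Matrix.one_mul]

lemma minner_conj {n : ℕ} {Um : Matrix (Fin n) (Fin n) ℂ} (hU : Um * Umᴴ = 1)
    (X Y : Matrix (Fin n) (Fin n) ℂ) :
    minner (Umᴴ * X * Um) (Umᴴ * Y * Um) = minner X Y := by
  unfold minner
  congr 1
  have h1 : (Umᴴ * Y * Um)ᴴ = Umᴴ * Yᴴ * Um := by
    simp only [Matrix.conjTranspose_mul, Matrix.conjTranspose_conjTranspose, Matrix.mul_assoc]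
  rw [h1, conj_mul_eq hU, Matrix.trace_mul_cycle, ← Matrix.mul_assoc, hU, Matrix.one_mul]

theorem commutator_sum_bound_subset (n : ℕ) (hn : 1 ≤ n)
    (Q : Fin (n ^ 2) → Matrix (Fin n) (Fin n) ℂ)
    (hHerm : ∀ α, (Q α)ᴴ = Q α)
    (hON : ∀ α β, minner (Q α) (Q β) = if α = β then 1 else 0)
    (α : Fin (n ^ 2)) (J : Finset (Fin (n ^ 2))) :
    ∑ β ∈ J, (frobSq (mcomm (Q α) (Q β)) - 4 / 3) ≤ 4 / 3 := by
  classical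
  have hA : (Q α).IsHermitian := hHerm α
  set Um : Matrix (Fin n) (Fin n) ℂ := (hA.eigenvectorUnitary : Matrix (Fin n) (Fin n) ℂ)
    with hUm
  set lam : Fin n → ℝ := hA.eigenvalues with hlamdef
  have hU1 : Um * Umᴴ = 1 := by
    rw [← Matrix.star_eq_conjTranspose]
    exact (Matrix.mem_unitaryGroup_iff).mp hA.eigenvectorUnitary.2
  have hU2 : Umᴴ * Um = 1 := by
    rw [← Matrix.star_eq_conjTranspose]
    exact (Matrix.mem_unitaryGroup_iff').mp hA.eigenvectorUnitary.2
  set D : Matrix (Fin n) (Fin n) ℂ := Matrix.diagonal (fun i => ((lam i : ℝ) : ℂ)) with hDdef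
  have hD : Umᴴ * (Q α) * Um = D := by
    rw [← Matrix.star_eq_conjTranspose] at *
    have h := Matrix.IsHermitian.conjStarAlgAut_star_eigenvectorUnitary (hHerm α : (Q α).IsHermitian)
    rw [Unitary.conjStarAlgAut_star_apply] at h
    exact h
  set R : Fin (n ^ 2) → Matrix (Fin n) (Fin n) ℂ := fun β => Umᴴ * (Q β) * Um with hRdef
  have hON_R : ∀ β γ, minner (R β) (R γ) = if β = γ then 1 else 0 := by
    intro β γ
    rw [hRdef]
    simp only
    rw [minner_conj hU1]
    exact hON β γ
  have hherm_R : ∀ β, (R β)ᴴ = R β := by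
    intro β
    rw [hRdef]
    simp only [Matrix.conjTranspose_mul, Matrix.conjTranspose_conjTranspose, hHerm β,
      Matrix.mul_assoc]
  -- commutator conjugation
  have hcomm : ∀ β, Umᴴ * (mcomm (Q α) (Q β)) * Um = mcomm D (R β) := by
    intro β
    rw [mcomm, mcomm, ← hD]
    simp only [hRdef]
    rw [conj_mul_eq hU1, conj_mul_eq hU1, Matrix.mul_sub, Matrix.sub_mul]
  have hfrob_conj : ∀ X : Matrix (Fin n) (Fin n) ℂ, frobSq (Umᴴ * X * Um) = frobSq X := by
    intro X
    have : ∀ Y : Matrix (Fin n) (Fin n) ℂ, frobSq Y = minner Y Y := fun _ => rfl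
    rw [this, this, minner_conj hU1]
  -- eigenvalue norm
  have hlam : ∑ i, lam i ^ 2 = 1 := by
    have h1 : frobSq D = 1 := by
      rw [← hD, hfrob_conj]
      have : frobSq (Q α) = minner (Q α) (Q α) := rfl
      rw [this, hON α α, if_pos rfl]
    rw [frobSq_eq_sum] at h1
    rw [← h1]
    refine Finset.sum_congr rfl fun i _ => ?_
    rw [Finset.sum_eq_single i]
    · rw [hDdef]
      simp [Matrix.diagonal_apply_eq, Complex.normSq_ofReal, sq]
    · intro j _ hj
      rw [hDdef]
      simp [Matrix.diagonal_apply_ne' _ hj]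
    · intro h; exact absurd (Finset.mem_univ i) h
  -- Frobenius norm of R β
  have hfrobR : ∀ β, ∑ i, ∑ j, Complex.normSq (R β i j) = 1 := by
    intro β
    rw [← frobSq_eq_sum]
    have : frobSq (R β) = minner (R β) (R β) := rfl
    rw [this, hON_R β β, if_pos rfl]
  -- entrywise formula for the commutator norm
  have hentry : ∀ β, frobSq (mcomm (Q α) (Q β))
      = ∑ i, ∑ j, (lam i - lam j) ^ 2 * Complex.normSq (R β i j) := by
    intro β
    rw [← hfrob_conj (mcomm (Q α) (Q β)), hcomm β, frobSq_eq_sum]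
    refine Finset.sum_congr rfl fun i _ => Finset.sum_congr rfl fun j _ => ?_
    have he : (mcomm D (R β)) i j = (((lam i - lam j : ℝ) : ℂ)) * (R β i j) := by
      rw [mcomm, Matrix.sub_apply, hDdef, Matrix.diagonal_mul, Matrix.mul_diagonal]
      push_cast
      ring
    rw [he, Complex.normSq_mul, Complex.normSq_ofReal]
    ring
  -- main chain
  calc ∑ β ∈ J, (frobSq (mcomm (Q α) (Q β)) - 4 / 3)
      = ∑ β ∈ J, ∑ i, ∑ j, ((lam i - lam j) ^ 2 - 4 / 3) * Complex.normSq (R β i j) := by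
        refine Finset.sum_congr rfl fun β _ => ?_
        rw [hentry β]
        have expand : ∑ i, ∑ j, ((lam i - lam j) ^ 2 - 4 / 3) * Complex.normSq (R β i j)
            = (∑ i, ∑ j, (lam i - lam j) ^ 2 * Complex.normSq (R β i j))
              - 4 / 3 * ∑ i, ∑ j, Complex.normSq (R β i j) := by
          rw [Finset.mul_sum, ← Finset.sum_sub_distrib]
          refine Finset.sum_congr rfl fun i _ => ?_
          rw [Finset.mul_sum, ← Finset.sum_sub_distrib]
          exact Finset.sum_congr rfl fun j _ => by ring
        rw [expand, hfrobR β]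
        ring
    _ ≤ ∑ β ∈ J, ∑ i, ∑ j, (max ((lam i - lam j) ^ 2 - 4 / 3) 0) * Complex.normSq (R β i j) := by
        refine Finset.sum_le_sum fun β _ => Finset.sum_le_sum fun i _ =>
          Finset.sum_le_sum fun j _ => ?_
        exact mul_le_mul_of_nonneg_right (le_max_left _ _) (Complex.normSq_nonneg _)
    _ = ∑ i, ∑ j, (max ((lam i - lam j) ^ 2 - 4 / 3) 0) * ∑ β ∈ J, Complex.normSq (R β i j) := by
        rw [Finset.sum_comm]
        refine Finset.sum_congr rfl fun i _ => ?_
        rw [Finset.sum_comm]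
        refine Finset.sum_congr rfl fun j _ => ?_
        rw [Finset.mul_sum]
    _ ≤ ∑ i, ∑ j, max ((lam i - lam j) ^ 2 - 4 / 3) 0 := by
        refine Finset.sum_le_sum fun i _ => Finset.sum_le_sum fun j _ => ?_
        by_cases hij : i = j
        · have h0 : max ((lam j - lam j) ^ 2 - 4 / 3) 0 = 0 := max_eq_right (by norm_num)
          rw [hij, h0, zero_mul]
        · calc (max ((lam i - lam j) ^ 2 - 4 / 3) 0) * ∑ β ∈ J, Complex.normSq (R β i j)
              ≤ (max ((lam i - lam j) ^ 2 - 4 / 3) 0) * 1 :=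
                mul_le_mul_of_nonneg_left (sum_normSq_le R hherm_R hON_R J hij)
                  (le_max_right _ _)
            _ = max ((lam i - lam j) ^ 2 - 4 / 3) 0 := mul_one _
    _ ≤ 4 / 3 := clip_bound lam hlam
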